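/- arXiv:1711.04692 — 4 statements merged into one kernel-verified Lean document; each statement's English description precedes it below -/
import Mathlib

section
/- Let d ≥ 1 be an integer, U an open subset of ℝ^d, and L_1, …, L_r linear partial differential operators on U with continuous coefficients. Then the following are equivalent: (1) for every infinitely differentiable real function φ on U with compact support, the functions L_1φ, …, L_rφ are linearly dependent in the real vector space C(U) of continuous real functions on U; (2) L_1, …, L_r are linearly dependent, i.e. there exist real numbers c_1, …, c_r, not all zero, such that c_1L_1 + ⋯ + c_rL_r is the zero operator. -/
/-- The partial derivative of `f : ℝ^d → ℝ` in the `i`-th coordinate direction. -/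
noncomputable def pderivFun {d : ℕ} (i : Fin d) (f : (Fin d → ℝ) → ℝ) :
    (Fin d → ℝ) → ℝ :=
  fun x => fderiv ℝ f x (Pi.single i 1)

/-- The iterated partial derivative `D^α f = ∂^|α| f / (∂x_1)^{α_1} ⋯ (∂x_d)^{α_d}`. -/
noncomputable def Dmulti {d : ℕ} (α : Fin d → ℕ) (f : (Fin d → ℝ) → ℝ) :
    (Fin d → ℝ) → ℝ :=
  (List.finRange d).foldr (fun i g => (pderivFun i)^[α i] g) f

/-- The action of the linear partial differential operator
`L = ∑_{α, |α| ≤ s} a_α D^α` (with coefficient family `a`) on a function `φ`. -/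
noncomputable def pdoApply {d : ℕ} (s : ℕ) (a : (Fin d → ℕ) → (Fin d → ℝ) → ℝ)
    (φ : (Fin d → ℝ) → ℝ) : (Fin d → ℝ) → ℝ :=
  fun x => ∑ α ∈ Fintype.piFinset (fun _ : Fin d => Finset.range (s + 1)),
    a α x * Dmulti α φ x

/-!
If `L_1, …, L_r` are linearly independent, so are the functions `(α, x) ↦ a_i^α(x)` on
`ℕ^d × U`; hence `r` evaluations `(α_k, x_k)` give a nonsingular matrix `(a_i^{α_k}(x_k))`.
By continuity it stays nonsingular when the `x_k` are moved to pairwise distinct points `y_k`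
(possible because `d ≥ 1`). A test function that equals `(x - y_k)^{α_k}` near each `y_k` has
`L_i φ (y_k) = α_k! a_i^{α_k}(y_k)`, so `L_1 φ, …, L_r φ` are linearly independent.
-/

open Function Finset
open scoped Topology ContDiff

theorem linearIndependent_iff_exists_det_ne_zero {K S : Type*} [Field K] {r : ℕ}
    (f : Fin r → S → K) :
    LinearIndependent K f ↔ ∃ p : Fin r → S, (Matrix.of fun i k => f i (p k)).det ≠ 0 := by
  refine ⟨fun hf => ?_, fun ⟨p, hp⟩ => ?_⟩
  · set w : S → Fin r → K := fun p i => f i p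
    have hspan : Submodule.span K (Set.range w) = ⊤ := by
      by_contra hne
      obtain ⟨g, hg0, hgw⟩ :=
        (Submodule.span K (Set.range w)).exists_le_ker_of_lt_top (lt_top_iff_ne_top.2 hne)
      have hc : ∑ i, g (Pi.single i 1) • f i = 0 := by
        funext p
        have := hgw (Submodule.subset_span ⟨p, rfl⟩)
        rw [LinearMap.mem_ker, pi_eq_sum_univ' (w p), map_sum] at this
        simpa [w, mul_comm] using this
      exact hg0 (LinearMap.pi_ext' fun i => LinearMap.ext_ring
        (Fintype.linearIndependent_iff.1 hf _ hc i))
    have hr : Module.finrank K (Submodule.span K (Set.range w)) = r := by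
      rw [hspan, finrank_top, Module.finrank_fin_fun]
    obtain ⟨v, hvw, -, hv⟩ := Submodule.exists_fun_fin_finrank_span_eq K (Set.range w)
    choose p hp using fun k => hvw (Fin.cast hr.symm k)
    refine ⟨p, (Matrix.isUnit_iff_isUnit_det _).1 ?_ |>.ne_zero⟩
    rw [← Matrix.linearIndependent_cols_iff_isUnit]
    have hcols : (Matrix.of fun i k => f i (p k)).col = v ∘ Fin.cast hr.symm := funext hp
    exact hcols ▸ hv.comp _ (Fin.cast_injective hr.symm)
  · exact .of_comp (LinearMap.funLeft K K p) (Matrix.linearIndependent_rows_of_det_ne_zero hp)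

theorem isOpen_setOf_det_ne_zero {X ι R : Type*} [TopologicalSpace X] [Fintype ι]
    [DecidableEq ι] [CommRing R] [TopologicalSpace R] [IsTopologicalRing R] [T1Space R]
    {U : Set X} (hU : IsOpen U) {g : ι → ι → X → R} (hg : ∀ i k, ContinuousOn (g i k) U) :
    IsOpen {y : ι → X | (∀ k, y k ∈ U) ∧ (Matrix.of fun i k => g i k (y k)).det ≠ 0} := by
  have hcont : ContinuousOn (fun y : ι → X => (Matrix.of fun i k => g i k (y k)).det)
      (Set.univ.pi fun _ => U) :=
    continuous_id.matrix_det.comp_continuousOn <| continuousOn_pi.2 fun i => continuousOn_pi.2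
      fun k => (hg i k).comp (continuous_apply k).continuousOn fun y hy => hy k (Set.mem_univ k)
  simpa [Set.ofPred_and, Set.pi] using
    hcont.isOpen_inter_preimage (isOpen_set_pi Set.finite_univ fun _ _ => hU) isOpen_ne

theorem exists_injective_forall_mem {ι α : Type*} [Fintype ι] {O : ι → Set α}
    (hO : ∀ k, (O k).Infinite) : ∃ y : ι → α, Injective y ∧ ∀ k, y k ∈ O k := by
  classical
  choose T hTO hTcard using fun k => (hO k).exists_subset_card_eq (Fintype.card ι)
  have hall : ∀ s : Finset ι, #s ≤ #(s.biUnion T) := by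
    intro s
    rcases s.eq_empty_or_nonempty with rfl | ⟨k, hk⟩
    · simp
    · calc #s ≤ Fintype.card ι := s.card_le_univ
        _ = #(T k) := (hTcard k).symm
        _ ≤ #(s.biUnion T) := card_le_card (subset_biUnion_of_mem T hk)
  obtain ⟨y, hy, hyT⟩ := (all_card_le_biUnion_card_iff_exists_injective T).1 hall
  exact ⟨y, hy, fun k => hTO k (hyT k)⟩

theorem IsOpen.exists_injective_mem {X ι : Type*} [TopologicalSpace X] [T1Space X]
    [∀ x : X, (𝓝[≠] x).NeBot] [Fintype ι] {W : Set (ι → X)} (hW : IsOpen W)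
    (hne : W.Nonempty) : ∃ y ∈ W, Injective y := by
  obtain ⟨x, hx⟩ := hne
  obtain ⟨u, hu, huW⟩ := isOpen_pi_iff'.1 hW x hx
  obtain ⟨y, hy, hyu⟩ := exists_injective_forall_mem fun k =>
    infinite_of_mem_nhds (x k) ((hu k).1.mem_nhds (hu k).2)
  exact ⟨y, huW fun k _ => hyu k, hy⟩

theorem exists_contDiff_hasCompactSupport_eventuallyEq {E ι : Type*} [NormedAddCommGroup E]
    [NormedSpace ℝ E] [FiniteDimensional ℝ E] [Fintype ι] {n : ℕ∞} {U : Set E}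
    (hU : IsOpen U) {y : ι → E} (hy : Injective y) (hyU : ∀ k, y k ∈ U) {m : ι → E → ℝ}
    (hm : ∀ k, ContDiff ℝ n (m k)) :
    ∃ φ : E → ℝ, ContDiff ℝ n φ ∧ HasCompactSupport φ ∧ tsupport φ ⊆ U ∧
      ∀ k, φ =ᶠ[𝓝 (y k)] m k := by
  obtain ⟨δ, hδ, hdisj⟩ :=
    (pairwise_disjoint_nhds.comp_of_injective hy).exists_mem_filter_basis_of_disjoint
      fun k => Metric.nhds_basis_closedBall.restrict_subset (hU.mem_nhds (hyU k))
  let χ : ∀ k, ContDiffBump (y k) := fun k =>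
    ⟨δ k / 2, δ k, half_pos (hδ k).1, half_lt_self (hδ k).1⟩
  set K := ⋃ k, Metric.closedBall (y k) (δ k)
  have hsupp : support (fun x => ∑ k, χ k x * m k x) ⊆ K :=
    (support_sum _ _).trans <| Set.iUnion₂_subset fun k _ =>
      (support_mul_subset_left _ _).trans <| (χ k).support_eq.trans_subset <|
        Metric.ball_subset_closedBall.trans <|
          Set.subset_iUnion (fun k => Metric.closedBall (y k) (δ k)) k
  have htsupp : tsupport (fun x => ∑ k, χ k x * m k x) ⊆ K :=
    closure_minimal hsupp (isClosed_iUnion_of_finite fun k => Metric.isClosed_closedBall)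
  refine ⟨fun x => ∑ k, χ k x * m k x, ContDiff.sum fun k _ => (χ k).contDiff.mul (hm k),
    (isCompact_iUnion fun k => isCompact_closedBall _ _).of_isClosed_subset
      (isClosed_tsupport _) htsupp,
    htsupp.trans (Set.iUnion_subset fun k => (hδ k).2), fun k => ?_⟩
  filter_upwards [Metric.closedBall_mem_nhds (y k) (half_pos (hδ k).1)] with x hx
  have hχj : ∀ j ≠ k, χ j x = 0 := fun j hj => notMem_support.1 fun hxj =>
    Set.disjoint_left.1 (hdisj hj) (Metric.ball_subset_closedBall ((χ j).support_eq ▸ hxj))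
      (Metric.closedBall_subset_closedBall (half_le_self (hδ k).1.le) hx)
  rw [Fintype.sum_eq_single k fun j hj => by rw [hχj j hj, zero_mul],
    (χ k).one_of_mem_closedBall hx, one_mul]

theorem prod_update_apply {ι X M : Type*} [Fintype ι] [DecidableEq ι] [CommMonoid M]
    (F : ι → X → M) (i : ι) (G : X → M) (x : ι → X) :
    ∏ j, update F i G j (x j) = G (x i) * ∏ j ∈ univ.erase i, F j (x j) := by
  rw [← mul_prod_erase univ _ (mem_univ i), update_self]
  congr 1
  exact prod_congr rfl fun j hj => by rw [update_of_ne (ne_of_mem_erase hj)]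

theorem pderivFun_prod {d : ℕ} {F : Fin d → ℝ → ℝ} (hF : ∀ j, Differentiable ℝ (F j))
    (i : Fin d) :
    pderivFun i (fun x => ∏ j, F j (x j)) = fun x => ∏ j, update F i (deriv (F i)) j (x j) := by
  funext x
  have hprod := HasFDerivAt.finsetProd (u := univ) (g := fun j (x : Fin d → ℝ) => F j (x j))
    (x := x) fun j _ => (hF j (x j)).hasDerivAt.hasFDerivAt.comp x (hasFDerivAt_apply j x)
  rw [pderivFun, hprod.fderiv, prod_update_apply]
  simp [Pi.single_apply, mul_comm]

theorem iterate_pderivFun_prod {d : ℕ} {F : Fin d → ℝ → ℝ} (hF : ∀ j, ContDiff ℝ ∞ (F j))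
    (i : Fin d) (n : ℕ) :
    (pderivFun i)^[n] (fun x => ∏ j, F j (x j)) =
      fun x => ∏ j, update F i (deriv^[n] (F i)) j (x j) := by
  induction n generalizing F with
  | zero => simp
  | succ n ih =>
    have hF' : ∀ j, ContDiff ℝ ∞ (update F i (deriv (F i)) j) :=
      (forall_update_iff _ fun j (G : ℝ → ℝ) => ContDiff ℝ ∞ G).2 ⟨(hF i).deriv', fun j _ => hF j⟩
    rw [iterate_succ_apply, pderivFun_prod fun j => (hF j).differentiable (by simp), ih hF',
      update_idem, update_self, iterate_succ_apply]

theorem Dmulti_prod {d : ℕ} {F : Fin d → ℝ → ℝ} (hF : ∀ j, ContDiff ℝ ∞ (F j))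
    (α : Fin d → ℕ) :
    Dmulti α (fun x => ∏ j, F j (x j)) = fun x => ∏ j, deriv^[α j] (F j) (x j) := by
  suffices ∀ l : List (Fin d), l.Nodup → l.foldr (fun i g => (pderivFun i)^[α i] g)
      (fun x => ∏ j, F j (x j)) = fun x => ∏ j, (if j ∈ l then deriv^[α j] (F j) else F j) (x j) by
    simpa [Dmulti] using this _ (List.nodup_finRange d)
  intro l hl
  induction l with
  | nil => simp
  | cons i l ih =>
    have hsmooth : ∀ j, ContDiff ℝ ∞ (if j ∈ l then deriv^[α j] (F j) else F j) := fun j => by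
      split_ifs
      exacts [(hF j).iterate_deriv _, hF j]
    rw [List.foldr_cons, ih hl.of_cons, iterate_pderivFun_prod hsmooth]
    congr! 3 with x j
    rcases eq_or_ne j i with rfl | hji
    · simp [(List.nodup_cons.1 hl).1]
    · simp [hji]

theorem iterate_deriv_sub_pow_self (c : ℝ) (m n : ℕ) :
    deriv^[n] (fun t => (t - c) ^ m) c = if n = m then (m.factorial : ℝ) else 0 := by
  rw [← iteratedDeriv_eq_iterate, iteratedDeriv_comp_sub_const (f := fun t => t ^ m)]
  simp only [sub_self, iteratedDeriv_fun_pow_zero, Nat.cast_ite, Nat.cast_zero]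

theorem Dmulti_prod_sub_pow_self {d : ℕ} (α β : Fin d → ℕ) (c : Fin d → ℝ) :
    Dmulti β (fun x => ∏ j, (x j - c j) ^ α j) c =
      if β = α then ∏ j, ((α j).factorial : ℝ) else 0 := by
  rw [Dmulti_prod (F := fun j t => (t - c j) ^ α j)
    fun j => (contDiff_id.sub contDiff_const).pow (α j)]
  simp [iterate_deriv_sub_pow_self, prod_ite_zero, funext_iff]

theorem Filter.EventuallyEq.iterate_pderivFun {d : ℕ} {f g : (Fin d → ℝ) → ℝ} {x : Fin d → ℝ}
    (h : f =ᶠ[𝓝 x] g) (i : Fin d) (n : ℕ) :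
    (pderivFun i)^[n] f =ᶠ[𝓝 x] (pderivFun i)^[n] g := by
  induction n with
  | zero => exact h
  | succ n ih =>
    simp only [iterate_succ_apply']
    exact ih.fderiv.fun_comp fun L => L (Pi.single i 1)

theorem Filter.EventuallyEq.Dmulti {d : ℕ} {f g : (Fin d → ℝ) → ℝ} {x : Fin d → ℝ}
    (h : f =ᶠ[𝓝 x] g) (α : Fin d → ℕ) : Dmulti α f =ᶠ[𝓝 x] Dmulti α g := by
  unfold _root_.Dmulti
  induction List.finRange d with
  | nil => exact h
  | cons i l ih => exact ih.iterate_pderivFun i (α i)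

theorem sum_mul_pdoApply {ι : Type*} [Fintype ι] {d s : ℕ} (c : ι → ℝ)
    (a : ι → (Fin d → ℕ) → (Fin d → ℝ) → ℝ) (φ : (Fin d → ℝ) → ℝ) (x : Fin d → ℝ) :
    ∑ i, c i * pdoApply s (a i) φ x = pdoApply s (fun α x => ∑ i, c i * a i α x) φ x := by
  simp only [pdoApply, mul_sum, sum_mul, mul_assoc]
  exact sum_comm

theorem pdoApply_eq_of_Dmulti_eq_ite {d s : ℕ} {a : (Fin d → ℕ) → (Fin d → ℝ) → ℝ}
    {φ : (Fin d → ℝ) → ℝ} {y : Fin d → ℝ} {α : Fin d → ℕ} {C : ℝ} (hα : ∀ j, α j ≤ s)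
    (hφ : ∀ β, Dmulti β φ y = if β = α then C else 0) :
    pdoApply s a φ y = a α y * C := by
  rw [pdoApply, sum_eq_single_of_mem α (by simpa [Nat.lt_succ_iff] using hα)
    fun β _ hβ => by rw [hφ, if_neg hβ, mul_zero], hφ, if_pos rfl]

theorem exists_linearIndependent_pdoApply {d r s : ℕ} (hd : 1 ≤ d) {U : Set (Fin d → ℝ)}
    (hU : IsOpen U) {a : Fin r → (Fin d → ℕ) → (Fin d → ℝ) → ℝ}
    (hcont : ∀ i α, ContinuousOn (a i α) U) (hdeg : ∀ i α, s < ∑ j, α j → a i α = 0)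
    (hli : LinearIndependent ℝ fun i (p : (Fin d → ℕ) × U) => a i p.1 p.2) :
    ∃ φ : (Fin d → ℝ) → ℝ, ContDiff ℝ ∞ φ ∧ HasCompactSupport φ ∧ tsupport φ ⊆ U ∧
      LinearIndependent ℝ fun i (x : U) => pdoApply s (a i) φ x := by
  classical
  obtain ⟨p, hp⟩ := (linearIndependent_iff_exists_det_ne_zero _).1 hli
  set α := fun k => (p k).1
  have : Nonempty (Fin d) := ⟨⟨0, hd⟩⟩
  obtain ⟨y, ⟨hyU, hy⟩, hinj⟩ := (isOpen_setOf_det_ne_zero hU fun i k => hcont i (α k)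
    ).exists_injective_mem ⟨fun k => (p k).2, fun k => (p k).2.2, hp⟩
  have hαs : ∀ k j, α k j ≤ s := fun k j => by
    by_contra! h
    refine hy (Matrix.det_eq_zero_of_column_eq_zero k fun i => ?_)
    simp [hdeg i (α k) (h.trans_le (single_le_sum (fun _ _ => Nat.zero_le _) (mem_univ j)))]
  obtain ⟨φ, hφ, hφc, hφU, hφy⟩ := exists_contDiff_hasCompactSupport_eventuallyEq hU hinj hyU
    (m := fun k x => ∏ j, (x j - y k j) ^ α k j)
    fun k => contDiff_prod fun j _ => ((contDiff_apply ℝ ℝ j).sub contDiff_const).pow _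
  have hL : ∀ i k,
      pdoApply s (a i) φ (y k) = (∏ j, ((α k j).factorial : ℝ)) * a i (α k) (y k) := fun i k => by
    rw [pdoApply_eq_of_Dmulti_eq_ite (hαs k) fun β =>
      ((hφy k).Dmulti β).eq_of_nhds.trans (Dmulti_prod_sub_pow_self _ _ _), mul_comm]
  refine ⟨φ, hφ, hφc, hφU, (linearIndependent_iff_exists_det_ne_zero _).2
    ⟨fun k => ⟨y k, hyU k⟩, ?_⟩⟩
  simp only [hL]
  exact (Matrix.det_mul_row _ (Matrix.of fun i k => a i (α k) (y k))).trans_ne <| mul_ne_zero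
    (prod_ne_zero_iff.2 fun k _ => prod_ne_zero_iff.2 fun j _ =>
      Nat.cast_ne_zero.2 (α k j).factorial_ne_zero) hy

/-- **Theorem 1 (smooth compactly supported test functions).**
Linear partial differential operators `L_1, …, L_r` with continuous coefficients on an
open set `U ⊆ ℝ^d` are locally linearly dependent (i.e. `L_1 φ, …, L_r φ` are linearly
dependent in `C(U)` for every `φ ∈ C_c^∞(U)`) iff they are linearly dependent. -/
theorem local_linear_dependence_of_pdos
    (d : ℕ) (hd : 1 ≤ d) (U : Set (Fin d → ℝ)) (hU : IsOpen U)
    (r s : ℕ)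
    (a : Fin r → (Fin d → ℕ) → (Fin d → ℝ) → ℝ)
    (hcont : ∀ i α, ContinuousOn (a i α) U)
    (hdeg : ∀ i α, s < ∑ j, α j → a i α = 0) :
    (∀ φ : (Fin d → ℝ) → ℝ, ContDiff ℝ (⊤ : ℕ∞) φ → HasCompactSupport φ →
        tsupport φ ⊆ U →
        ¬ LinearIndependent ℝ (fun i : Fin r => fun x : U => pdoApply s (a i) φ x)) ↔
      ∃ c : Fin r → ℝ, c ≠ 0 ∧ ∀ α : Fin d → ℕ, ∀ x ∈ U, ∑ i, c i * a i α x = 0 := by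
  refine ⟨fun H => ?_, fun ⟨c, hc0, hc⟩ φ _ _ _ => ?_⟩
  · by_contra! hdep
    have hli : LinearIndependent ℝ fun i (p : (Fin d → ℕ) × U) => a i p.1 p.2 :=
      Fintype.linearIndependent_iff.2 fun c hc => by
        by_contra! hc0
        obtain ⟨α, x, hx, hne⟩ := hdep c (Function.ne_iff.2 hc0)
        exact hne (by simpa using congrFun hc (α, ⟨x, hx⟩))
    obtain ⟨φ, hφ, hφc, hφU, hφli⟩ := exists_linearIndependent_pdoApply hd hU hcont hdeg hli
    exact H φ hφ hφc hφU hφli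
  · refine Fintype.not_linearIndependent_iff.2 ⟨c, funext fun x => ?_, Function.ne_iff.1 hc0⟩
    rw [Finset.sum_apply]
    simp only [Pi.smul_apply, smul_eq_mul, Pi.zero_apply]
    rw [sum_mul_pdoApply]
    exact sum_eq_zero fun α _ => mul_eq_zero_of_left (hc α x x.2) _
end

section
/- Multivariate Hermite interpolation: let d, m be positive integers and let k_1, …, k_m be nonnegative integers. For every choice of pairwise distinct points z_1, …, z_m ∈ ℝ^d and every choice of real values c_{q,α} for q = 1, …, m and multi-indices α ∈ ℕ^d with |α| ≤ k_q, there exists a polynomial P ∈ ℝ[x_1, …, x_d] such that D^α P(z_q) = c_{q,α} for every q = 1, …, m and every α ∈ ℕ^d with |α| ≤ k_q. -/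
/-- The iterated formal partial derivative
`D^α P = ∂^|α| P / (∂x_1)^{α_1} ⋯ (∂x_d)^{α_d}` of a polynomial `P`. -/
noncomputable def DmultiPoly {d : ℕ} (α : Fin d → ℕ) (P : MvPolynomial (Fin d) ℝ) :
    MvPolynomial (Fin d) ℝ :=
  (List.finRange d).foldr (fun i Q => (fun R => MvPolynomial.pderiv i R)^[α i] Q) P

/-!
A derivation maps `I ^ (n + 1)` into `I ^ n`, so the values `D^α P (z)` with `|α| ≤ k` depend
only on the class of `P` modulo `𝔪_z ^ (k + 1)`, where `𝔪_z` is the maximal ideal of `z`.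
At a single point the problem is solved by translating `∑ c_α / α! • x^α` to `z`, because
`D^α` evaluated at the origin extracts `α!` times the coefficient of `x^α`. Maximal ideals of
distinct points are comaximal, hence so are their powers, and the Chinese remainder theorem
glues the single-point solutions.
-/

theorem Derivation.apply_mem_pow_of_mem_pow_succ {R A : Type*} [CommSemiring R]
    [CommSemiring A] [Algebra R A] (D : Derivation R A A) {I : Ideal A} :
    ∀ {n : ℕ} {x : A}, x ∈ I ^ (n + 1) → D x ∈ I ^ n
  | 0, _, _ => by simp
  | n + 1, x, hx => by
    rw [pow_succ] at hx
    refine Submodule.mul_induction_on hx (fun a ha b hb => ?_) fun x y hx hy => ?_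
    · have hDa : D a * b ∈ I ^ (n + 1) :=
        pow_succ I n ▸ Ideal.mul_mem_mul (apply_mem_pow_of_mem_pow_succ D ha) hb
      rw [D.leibniz, smul_eq_mul, smul_eq_mul, mul_comm b]
      exact add_mem (Ideal.mul_mem_right _ _ ha) hDa
    · rw [map_add]; exact add_mem hx hy

theorem Derivation.iterate_mem_pow {R A : Type*} [CommSemiring R] [CommSemiring A]
    [Algebra R A] (D : Derivation R A A) {I : Ideal A} {n : ℕ} {x : A} (hx : x ∈ I ^ n)
    (k : ℕ) :
    (⇑D)^[k] x ∈ I ^ (n - k) := by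
  induction k with
  | zero => simpa using hx
  | succ k ih =>
    rw [Function.iterate_succ_apply']
    rcases Nat.lt_or_ge k n with h | h
    · rw [show n - k = n - (k + 1) + 1 by omega] at ih
      exact D.apply_mem_pow_of_mem_pow_succ ih
    · simp [Nat.sub_eq_zero_of_le (Nat.le_succ_of_le h)]

namespace MvPolynomial

variable {R σ : Type*}

section CommSemiring

variable [CommSemiring R]

theorem coeff_pderiv_iterate (i : σ) (k : ℕ) (p : MvPolynomial σ R) (m : σ →₀ ℕ) :
    coeff m ((⇑(pderiv i))^[k] p) =
      coeff (m + Finsupp.single i k) p * (m i + k).descFactorial k := by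
  induction k generalizing p with
  | zero => simp
  | succ k ih =>
    rw [Function.iterate_succ_apply, ih, coeff_pderiv, add_assoc, ← Finsupp.single_add,
      Finsupp.add_apply, Finsupp.single_eq_same, ← add_assoc (m i), Nat.succ_descFactorial_succ]
    push_cast
    ring

noncomputable def iteratedPderiv (α : σ → ℕ) (l : List σ) : Module.End R (MvPolynomial σ R) :=
  (l.map fun i => (pderiv i).toLinearMap ^ α i).prod

@[simp]
theorem iteratedPderiv_nil (α : σ → ℕ) : iteratedPderiv (R := R) α [] = 1 := rfl

theorem iteratedPderiv_cons_apply (α : σ → ℕ) (i : σ) (l : List σ) (p : MvPolynomial σ R) :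
    iteratedPderiv α (i :: l) p = (⇑(pderiv i))^[α i] (iteratedPderiv α l p) := by
  simp [iteratedPderiv, Module.End.pow_apply]

theorem iteratedPderiv_mem_pow (α : σ → ℕ) (l : List σ) {I : Ideal (MvPolynomial σ R)} {n : ℕ}
    {p : MvPolynomial σ R} (hp : p ∈ I ^ n) :
    iteratedPderiv α l p ∈ I ^ (n - (l.map α).sum) := by
  induction l with
  | nil => simpa using hp
  | cons i l ih =>
    rw [iteratedPderiv_cons_apply, List.map_cons, List.sum_cons, add_comm, ← Nat.sub_sub]
    exact (pderiv i).iterate_mem_pow ih _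

theorem coeff_iteratedPderiv (α : σ → ℕ) {l : List σ} (hl : l.Nodup) (p : MvPolynomial σ R)
    {m : σ →₀ ℕ} (hm : ∀ j ∈ l, m j = 0) :
    coeff m (iteratedPderiv α l p) =
      coeff (m + (l.map fun j => Finsupp.single j (α j)).sum) p *
        (l.map fun j => (α j).factorial).prod := by
  induction l generalizing m with
  | nil => simp
  | cons i l ih =>
    obtain ⟨hil, hl⟩ := List.nodup_cons.mp hl
    have hm' : ∀ j ∈ l, (m + Finsupp.single i (α i)) j = 0 := fun j hj => by
      simp [hm j (List.mem_cons_of_mem i hj),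
        Finsupp.single_eq_of_ne (ne_of_mem_of_not_mem hj hil)]
    rw [iteratedPderiv_cons_apply, coeff_pderiv_iterate, ih hl hm', hm i List.mem_cons_self,
      zero_add, Nat.descFactorial_self]
    simp only [List.map_cons, List.sum_cons, List.prod_cons, add_assoc, Nat.cast_mul]
    ring

end CommSemiring

section CommRing

variable [CommRing R]

noncomputable def translation (z : σ → R) : MvPolynomial σ R →ₐ[R] MvPolynomial σ R :=
  aeval fun i => X i - C (z i)

theorem eval_translation (z : σ → R) (p : MvPolynomial σ R) :
    eval z (translation z p) = eval 0 p := by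
  induction p using MvPolynomial.induction_on <;> simp_all [translation]

theorem pderiv_translation (z : σ → R) (i : σ) (p : MvPolynomial σ R) :
    pderiv i (translation z p) = translation z (pderiv i p) := by
  classical
  induction p using MvPolynomial.induction_on with
  | C a => simp [translation]
  | add p q hp hq => simp [hp, hq]
  | mul_X p j hp =>
    simp only [translation, map_mul, aeval_X, Derivation.leibniz, smul_eq_mul, map_add] at hp ⊢
    rw [hp]
    rcases eq_or_ne i j with rfl | h <;> simp [pderiv_X, *]

theorem iteratedPderiv_translation (α : σ → ℕ) (l : List σ) (z : σ → R)
    (p : MvPolynomial σ R) :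
    iteratedPderiv α l (translation z p) = translation z (iteratedPderiv α l p) := by
  induction l with
  | nil => rfl
  | cons i l ih =>
    rw [iteratedPderiv_cons_apply, iteratedPderiv_cons_apply, ih]
    exact (Function.Commute.iterate_left (fun q => pderiv_translation z i q) _ _)

end CommRing

theorem isCoprime_ker_eval {K : Type*} [Field K] {z w : σ → K} (h : z ≠ w) :
    IsCoprime (RingHom.ker (eval z)) (RingHom.ker (eval w)) := by
  obtain ⟨i, hi⟩ := Function.ne_iff.mp h
  have hδ : w i - z i ≠ 0 := sub_ne_zero.mpr (Ne.symm hi)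
  refine Ideal.isCoprime_iff_exists.mpr ⟨C (w i - z i)⁻¹ * (X i - C (z i)), ?_,
    C (w i - z i)⁻¹ * (C (w i) - X i), ?_, ?_⟩
  · simp [RingHom.mem_ker]
  · simp [RingHom.mem_ker]
  · rw [← mul_add, sub_add_sub_cancel', ← C_sub, ← C_mul, inv_mul_cancel₀ hδ, C_1]

end MvPolynomial

open MvPolynomial

section DmultiPoly

variable {d : ℕ}

theorem DmultiPoly_eq_iteratedPderiv (α : Fin d → ℕ) (P : MvPolynomial (Fin d) ℝ) :
    DmultiPoly α P = iteratedPderiv α (List.finRange d) P := by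
  unfold DmultiPoly
  induction List.finRange d with
  | nil => rfl
  | cons i l ih => rw [List.foldr_cons, ih, iteratedPderiv_cons_apply]

theorem eval_zero_DmultiPoly (α : Fin d → ℕ) (P : MvPolynomial (Fin d) ℝ) :
    eval 0 (DmultiPoly α P) =
      coeff (Finsupp.equivFunOnFinite.symm α) P * ∏ i, ((α i).factorial : ℝ) := by
  rw [eval_zero, constantCoeff_eq, DmultiPoly_eq_iteratedPderiv,
    coeff_iteratedPderiv α (List.nodup_finRange d) P fun _ _ => rfl, zero_add,
    ← Fin.sum_univ_def, ← Finsupp.equivFunOnFinite_symm_eq_sum, ← Fin.prod_univ_def,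
    Nat.cast_prod]

theorem exists_eval_DmultiPoly_eq (z : Fin d → ℝ) (T : Finset (Fin d → ℕ))
    (c : (Fin d → ℕ) → ℝ) :
    ∃ P : MvPolynomial (Fin d) ℝ, ∀ α ∈ T, eval z (DmultiPoly α P) = c α := by
  refine ⟨translation z (∑ β ∈ T,
    monomial (Finsupp.equivFunOnFinite.symm β) (c β / ∏ i, ((β i).factorial : ℝ))),
    fun α hα => ?_⟩
  have hfact : ∏ i, ((α i).factorial : ℝ) ≠ 0 :=
    Finset.prod_ne_zero_iff.mpr fun i _ => Nat.cast_ne_zero.mpr (Nat.factorial_ne_zero _)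
  rw [DmultiPoly_eq_iteratedPderiv, iteratedPderiv_translation, eval_translation,
    ← DmultiPoly_eq_iteratedPderiv, eval_zero_DmultiPoly, coeff_sum]
  simp [coeff_monomial, Finsupp.equivFunOnFinite.symm.injective.eq_iff, hα, hfact]

theorem eval_DmultiPoly_eq_of_sub_mem {z : Fin d → ℝ} {k : ℕ} {P Q : MvPolynomial (Fin d) ℝ}
    (hPQ : P - Q ∈ RingHom.ker (eval z) ^ (k + 1)) {α : Fin d → ℕ} (hα : ∑ j, α j ≤ k) :
    eval z (DmultiPoly α P) = eval z (DmultiPoly α Q) := by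
  have h := iteratedPderiv_mem_pow α (List.finRange d) hPQ
  rw [← Fin.sum_univ_def] at h
  rw [← sub_eq_zero, ← map_sub, DmultiPoly_eq_iteratedPderiv, DmultiPoly_eq_iteratedPderiv,
    ← map_sub, ← RingHom.mem_ker]
  exact Ideal.pow_le_self (by omega) h

end DmultiPoly

theorem multivariate_hermite_interpolation_general
    (d m : ℕ) (k : Fin m → ℕ)
    (z : Fin m → Fin d → ℝ) (hz : Function.Injective z)
    (c : Fin m → (Fin d → ℕ) → ℝ) :
    ∃ P : MvPolynomial (Fin d) ℝ, ∀ q : Fin m, ∀ α : Fin d → ℕ, (∑ j, α j) ≤ k q →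
      MvPolynomial.eval (z q) (DmultiPoly α P) = c q α := by
  choose Q hQ using fun q =>
    exists_eval_DmultiPoly_eq (z q) (Fintype.piFinset fun _ => Finset.range (k q + 1)) (c q)
  obtain ⟨P, hP⟩ := Ideal.exists_forall_sub_mem_ideal
    (I := fun q => RingHom.ker (eval (z q)) ^ (k q + 1))
    (fun p q hpq => (isCoprime_ker_eval (hz.ne hpq)).pow) Q
  refine ⟨P, fun q α hα => ?_⟩
  rw [eval_DmultiPoly_eq_of_sub_mem (hP q) hα]
  refine hQ q α (Fintype.mem_piFinset.mpr fun i => Finset.mem_range.mpr ?_)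
  have := Finset.single_le_sum (fun j _ => Nat.zero_le (α j)) (Finset.mem_univ i)
  omega

/-- **Theorem 2 (multivariate Hermite interpolation).**
Given pairwise distinct points `z_1, …, z_m ∈ ℝ^d` and prescribed values `c_{q,α}` for
all multi-indices `α` with `|α| ≤ k_q`, there is a polynomial `P ∈ ℝ[x_1, …, x_d]` with
`D^α P (z_q) = c_{q,α}` for all `q` and all `|α| ≤ k_q`. -/
theorem multivariate_hermite_interpolation
    (d m : ℕ) (hd : 0 < d) (hm : 0 < m) (k : Fin m → ℕ)
    (z : Fin m → Fin d → ℝ) (hz : Function.Injective z)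
    (c : Fin m → (Fin d → ℕ) → ℝ) :
    ∃ P : MvPolynomial (Fin d) ℝ, ∀ q : Fin m, ∀ α : Fin d → ℕ, (∑ j, α j) ≤ k q →
      MvPolynomial.eval (z q) (DmultiPoly α P) = c q α :=
  multivariate_hermite_interpolation_general d m k z hz c
end

section
/- Let 𝔽 be a field and let p_1, …, p_m be elements of the free algebra 𝔽⟨x_1, …, x_d⟩. Then the following are equivalent: (1) for every n ∈ ℕ, every d-tuple of matrices A_1, …, A_d ∈ 𝔽^{n×n}, and every vector v ∈ 𝔽^n, the vectors p_1(A_1, …, A_d)v, …, p_m(A_1, …, A_d)v are linearly dependent over 𝔽; (2) for every n ∈ ℕ and every A_1, …, A_d ∈ 𝔽^{n×n}, the matrices p_1(A_1, …, A_d), …, p_m(A_1, …, A_d) are linearly dependent over 𝔽; (3) p_1, …, p_m are linearly dependent in 𝔽⟨x_1, …, x_d⟩. -/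
/-!
If `p₁, …, pₘ` are linearly independent, all of them have degree at most some `N`. Let `Q` be the
quotient of `𝔽⟨x₁, …, x_d⟩` by the left ideal spanned by the words of length `> N`: it is finite
dimensional, with the words of length `≤ N` as a basis, so the classes `[pᵢ]` stay independent.
The free algebra acts on `Q` by left multiplication, and `pᵢ • [1] = [pᵢ]`; in a basis of `Q` the
actions of the generators are matrices `Aⱼ` with `pᵢ(A) v = [pᵢ]` for `v` the coordinates of `[1]`.
-/

open MonoidAlgebra Matrix

namespace MonoidAlgebra

variable {k X : Type*} [CommRing k]

variable (k) in
lemma isCompl_supported_compl (s : Set X) :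
    IsCompl (supported k k s) (supported k k sᶜ) := by
  rw [supported_eq_map, supported_eq_map]
  exact (Submodule.orderIsoMapComap (coeffLinearEquiv k).symm).isCompl
    ⟨Finsupp.disjoint_supported_supported isCompl_compl.disjoint,
      Finsupp.codisjoint_supported_supported isCompl_compl.codisjoint⟩

variable (k X) in
noncomputable def longWordsIdeal (N : ℕ) : Submodule k[FreeMonoid X] k[FreeMonoid X] where
  __ := supported k k {w : FreeMonoid X | w.length ≤ N}ᶜ
  smul_mem' c f hf := by
    classical
    change f ∈ supported k k _ at hf
    change c * f ∈ supported k k _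
    rw [mem_supported] at hf ⊢
    intro _ h
    obtain ⟨u, -, w, hw, rfl⟩ := Finset.mem_mul.1 (support_coeff_mul_subset c f h)
    have : N < w.length := by simpa using hf hw
    simp only [Set.mem_compl_iff, Set.mem_ofPred_eq, not_le, FreeMonoid.length_mul]
    omega

noncomputable def quotientLongWordsIdealEquiv (N : ℕ) :
    (k[FreeMonoid X] ⧸ longWordsIdeal k X N) ≃ₗ[k]
      supported k k {w : FreeMonoid X | w.length ≤ N} :=
  (Submodule.Quotient.restrictScalarsEquiv k _).symm ≪≫ₗ
    Submodule.quotientEquivOfIsCompl _ _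
      (isCompl_supported_compl k {w : FreeMonoid X | w.length ≤ N}).symm

lemma quotientLongWordsIdealEquiv_mk {N : ℕ}
    (f : supported k k {w : FreeMonoid X | w.length ≤ N}) :
    quotientLongWordsIdealEquiv N (Submodule.Quotient.mk (f : k[FreeMonoid X])) = f :=
  Submodule.quotientEquivOfIsCompl_apply_mk_right
    (isCompl_supported_compl k {w : FreeMonoid X | w.length ≤ N}).symm f

instance [Finite X] (N : ℕ) : Module.Finite k (k[FreeMonoid X] ⧸ longWordsIdeal k X N) :=
  have : Finite {w : FreeMonoid X | w.length ≤ N} := (List.finite_length_le X N).to_subtype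
  .equiv ((quotientLongWordsIdealEquiv N).trans (supportedEquivFinsupp _)).symm

instance (N : ℕ) : Module.Free k (k[FreeMonoid X] ⧸ longWordsIdeal k X N) :=
  .of_equiv ((quotientLongWordsIdealEquiv N).trans (supportedEquivFinsupp _)).symm

lemma linearIndependent_mk_longWordsIdeal {ι : Type*} {N : ℕ} {q : ι → k[FreeMonoid X]}
    (hq : ∀ i, q i ∈ supported k k {w : FreeMonoid X | w.length ≤ N})
    (hli : LinearIndependent k q) :
    LinearIndependent k
      fun i ↦ (Submodule.Quotient.mk (q i) : k[FreeMonoid X] ⧸ longWordsIdeal k X N) := by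
  refine .of_comp (quotientLongWordsIdealEquiv N).toLinearMap ?_
  have : (quotientLongWordsIdealEquiv N).toLinearMap ∘ (fun i ↦ Submodule.Quotient.mk (q i)) =
      fun i ↦ (⟨q i, hq i⟩ : supported k k {w : FreeMonoid X | w.length ≤ N}) :=
    funext fun i ↦ quotientLongWordsIdealEquiv_mk ⟨q i, hq i⟩
  rw [this]
  exact .of_comp (Submodule.subtype _) hli

lemma exists_forall_mem_supported_length_le {ι : Type*} [Finite ι] (q : ι → k[FreeMonoid X]) :
    ∃ N, ∀ i, q i ∈ supported k k {w : FreeMonoid X | w.length ≤ N} := by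
  cases nonempty_fintype ι
  refine ⟨Finset.univ.sup fun i ↦ (q i).coeff.support.sup FreeMonoid.length, fun i w hw ↦ ?_⟩
  exact (Finset.le_sup (f := FreeMonoid.length) hw).trans
    (Finset.le_sup (f := fun i ↦ (q i).coeff.support.sup _) (Finset.mem_univ i))

end MonoidAlgebra

namespace FreeAlgebra

variable {k X M : Type*} [CommRing k] [AddCommGroup M] [Module k M]

lemma lift_toMatrix {n : Type*} [Fintype n] [DecidableEq n] (b : Module.Basis n k M)
    (φ : FreeAlgebra k X →ₐ[k] Module.End k M) (q : FreeAlgebra k X) :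
    lift k (fun j ↦ LinearMap.toMatrix b b (φ (ι k j))) q = LinearMap.toMatrix b b (φ q) := by
  have : lift k (fun j ↦ LinearMap.toMatrix b b (φ (ι k j))) =
      (LinearMap.toMatrixAlgEquiv b : Module.End k M →ₐ[k] _).comp φ := by
    ext j
    simp [LinearMap.toMatrixAlgEquiv_apply, LinearMap.toMatrix_apply]
  rw [this]
  rfl

lemma exists_linearIndependent_mulVec_of_linearIndependent_apply [Nontrivial k]
    [Module.Free k M] [Module.Finite k M] {κ : Type*} {p : κ → FreeAlgebra k X}
    (φ : FreeAlgebra k X →ₐ[k] Module.End k M) (v : M)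
    (h : LinearIndependent k fun i ↦ φ (p i) v) :
    ∃ (n : ℕ) (A : X → Matrix (Fin n) (Fin n) k) (w : Fin n → k),
      LinearIndependent k fun i ↦ lift k A (p i) *ᵥ w := by
  let b := Module.finBasis k M
  refine ⟨_, fun j ↦ LinearMap.toMatrix b b (φ (ι k j)), b.repr v, ?_⟩
  simp only [lift_toMatrix, LinearMap.toMatrix_mulVec_repr]
  exact LinearIndependent.map' h b.equivFun.toLinearMap b.equivFun.ker

theorem exists_linearIndependent_mulVec [Nontrivial k] [Finite X] {κ : Type*} [Finite κ]
    {p : κ → FreeAlgebra k X} (hp : LinearIndependent k p) :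
    ∃ (n : ℕ) (A : X → Matrix (Fin n) (Fin n) k) (v : Fin n → k),
      LinearIndependent k fun i ↦ lift k A (p i) *ᵥ v := by
  let ψ : FreeAlgebra k X ≃ₐ[k] k[FreeMonoid X] := equivMonoidAlgebraFreeMonoid
  obtain ⟨N, hN⟩ := exists_forall_mem_supported_length_le (ψ ∘ p)
  refine exists_linearIndependent_mulVec_of_linearIndependent_apply
    ((Algebra.lsmul k k (k[FreeMonoid X] ⧸ longWordsIdeal k X N)).comp ψ.toAlgHom)
    (Submodule.Quotient.mk 1) ?_
  have smul_mk_one : ∀ q : k[FreeMonoid X],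
      q • (Submodule.Quotient.mk 1 : k[FreeMonoid X] ⧸ longWordsIdeal k X N) =
        Submodule.Quotient.mk q := fun q ↦ by
    rw [← Submodule.Quotient.mk_smul, smul_eq_mul, mul_one]
  simp only [AlgHom.comp_apply, Algebra.lsmul_coe, smul_mk_one]
  exact linearIndependent_mk_longWordsIdeal hN (hp.map' ψ.toLinearMap ψ.toLinearEquiv.ker)

end FreeAlgebra

/-- **Theorem 6 (local-global principle for linear dependence of free polynomials).**
For `p_1, …, p_m` in the free algebra `𝔽⟨x_1, …, x_d⟩` over a field `𝔽`, the following
are equivalent: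
(1) for every `n`, all matrices `A_1, …, A_d ∈ 𝔽^{n×n}` and every vector `v ∈ 𝔽^n`, the
    vectors `p_1(A)v, …, p_m(A)v` are linearly dependent;
(2) for every `n` and all `A_1, …, A_d ∈ 𝔽^{n×n}`, the matrices `p_1(A), …, p_m(A)` are
    linearly dependent;
(3) `p_1, …, p_m` are linearly dependent. -/
theorem free_algebra_local_linear_dependence
    (𝔽 : Type*) [Field 𝔽] (d m : ℕ) (p : Fin m → FreeAlgebra 𝔽 (Fin d)) :
    [(∀ (n : ℕ) (A : Fin d → Matrix (Fin n) (Fin n) 𝔽) (v : Fin n → 𝔽),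
        ¬ LinearIndependent 𝔽
          (fun i : Fin m => (FreeAlgebra.lift 𝔽 A (p i)).mulVec v)),
      (∀ (n : ℕ) (A : Fin d → Matrix (Fin n) (Fin n) 𝔽),
        ¬ LinearIndependent 𝔽 (fun i : Fin m => FreeAlgebra.lift 𝔽 A (p i))),
      ¬ LinearIndependent 𝔽 p].TFAE := by
  tfae_have 1 → 3 := fun h1 hp ↦
    let ⟨n, A, v, hv⟩ := FreeAlgebra.exists_linearIndependent_mulVec hp
    h1 n A v hv
  tfae_have 3 → 2 := fun h3 _ A hA ↦ h3 (hA.of_comp (FreeAlgebra.lift 𝔽 A).toLinearMap)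
  tfae_have 2 → 1 := fun h2 n A v hv ↦ h2 n A (hv.of_comp ((Matrix.mulVecBilin 𝔽 𝔽).flip v))
  tfae_finish
end

section
/- Let 𝔽 be a field and let p_1, …, p_m and q be elements of the free algebra 𝔽⟨x_1, …, x_d⟩. Then the following are equivalent: (1) for every n ∈ ℕ, every A_1, …, A_d ∈ 𝔽^{n×n}, and all vectors u, v ∈ 𝔽^n, if ⟨p_i(A_1, …, A_d)u, v⟩ = 0 for all i = 1, …, m, then ⟨q(A_1, …, A_d)u, v⟩ = 0, where ⟨·,·⟩ is the standard bilinear form ⟨a, b⟩ = ∑_j a_j b_j on 𝔽^n; (2) for every n ∈ ℕ, every A_1, …, A_d ∈ 𝔽^{n×n}, and every u ∈ 𝔽^n, the vector q(A_1, …, A_d)u lies in the 𝔽-linear span of p_1(A_1, …, A_d)u, …, p_m(A_1, …, A_d)u; (3) for every n ∈ ℕ and every A_1, …, A_d ∈ 𝔽^{n×n}, the matrix q(A_1, …, A_d) lies in the 𝔽-linear span of p_1(A_1, …, A_d), …, p_m(A_1, …, A_d); (4) q lies in the 𝔽-linear span of p_1, …, p_m in 𝔽⟨x_1, …, x_d⟩.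 -/
/-!
Only (2) ⇒ (4) needs an idea. Let `W` be the set of words of length at most `N` and let `x_i`
act on `𝔽^W` by the truncated left shift `w ↦ x_i w` (zero when `x_i w` is too long). Applied to
the empty word, `r(A)` produces the vector of coefficients of `r` on `W`, so `r ↦ r(A) u` is
injective on the polynomials of degree at most `N`; taking `N` at least the degrees of `q` and the
`p_i`, a linear relation among the vectors `p_i(A) u`, `q(A) u` lifts to one among the `p_i`, `q`.
(1) ⇔ (2) is linear duality in `𝔽^n`, and (4) ⇒ (3) ⇒ (2) apply linear maps to a span.
-/

open FreeAlgebra Matrix Submodule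

theorem Submodule.mem_span_range_of_disjoint_ker {R M N ι : Type*} [Ring R] [AddCommGroup M]
    [Module R M] [AddCommGroup N] [Module R N] [Fintype ι] {f : M →ₗ[R] N} {P : Submodule R M}
    (hP : Disjoint P (LinearMap.ker f)) {v : ι → M} {x : M} (hv : ∀ i, v i ∈ P) (hx : x ∈ P)
    (h : f x ∈ span R (Set.range (f ∘ v))) : x ∈ span R (Set.range v) := by
  obtain ⟨c, hc⟩ := (mem_span_range_iff_exists_fun R).mp h
  have hdiff : x - ∑ i, c i • v i ∈ P := P.sub_mem hx (P.sum_mem fun i _ => P.smul_mem _ (hv i))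
  have hker : x - ∑ i, c i • v i ∈ LinearMap.ker f := by
    simp [LinearMap.mem_ker, map_sum, ← hc]
  rw [sub_eq_zero.mp (disjoint_def.mp hP _ hdiff hker)]
  exact (mem_span_range_iff_exists_fun R).mpr ⟨c, rfl⟩

theorem Submodule.mem_span_iff_forall_dotProduct_eq_zero {K n : Type*} [Field K] [Fintype n]
    [DecidableEq n] {S : Set (n → K)} {x : n → K} :
    x ∈ span K S ↔ ∀ v, (∀ s ∈ S, s ⬝ᵥ v = 0) → x ⬝ᵥ v = 0 := by
  rw [← Subspace.forall_mem_dualAnnihilator_apply_eq_zero_iff,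
    (dotProductEquiv K n).surjective.forall]
  refine forall_congr' fun v => ?_
  rw [← SetLike.mem_coe, coe_dualAnnihilator_span]
  simp only [Set.mem_ofPred_eq, Set.subset_def, SetLike.mem_coe, LinearMap.mem_ker,
    dotProductEquiv_apply_apply, dotProduct_comm v]

theorem Submodule.apply_mem_span_range_of_mem_span {R M N ι : Type*} [Semiring R]
    [AddCommMonoid M] [Module R M] [AddCommMonoid N] [Module R N] (f : M →ₗ[R] N) {v : ι → M}
    {x : M} (h : x ∈ span R (Set.range v)) : f x ∈ span R (Set.range (f ∘ v)) := by
  simpa only [Set.range_comp] using apply_mem_span_image_of_mem_span f h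

instance {X : Type*} [DecidableEq X] : DecidableEq (FreeMonoid X) :=
  inferInstanceAs (DecidableEq (List X))

namespace FreeAlgebra

section Evaluation

variable {R X : Type*} [CommSemiring R]

theorem basisFreeMonoid_apply (w : FreeMonoid X) :
    basisFreeMonoid R X w = FreeMonoid.lift (ι R) w := by
  rw [basisFreeMonoid, Module.Basis.map_apply, Finsupp.coe_basisSingleOne]
  show equivMonoidAlgebraFreeMonoid.symm (MonoidAlgebra.single w 1) = _
  simp [equivMonoidAlgebraFreeMonoid, AlgEquiv.ofAlgHom, MonoidAlgebra.lift_single]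

theorem lift_basisFreeMonoid {A : Type*} [Semiring A] [Algebra R A] (f : X → A)
    (w : FreeMonoid X) : lift R f (basisFreeMonoid R X w) = FreeMonoid.lift f w := by
  rw [basisFreeMonoid_apply, ← (lift R f).coe_toMonoidHom, FreeMonoid.hom_map_lift]
  simp

variable {ι κ : Type*} [Fintype ι] [DecidableEq ι] [Fintype κ] [DecidableEq κ]

def liftMulVec (A : X → Matrix ι ι R) (u : ι → R) : FreeAlgebra R X →ₗ[R] ι → R :=
  LinearMap.applyₗ u ∘ₗ Matrix.toLin'.toLinearMap ∘ₗ (lift R A).toLinearMap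

@[simp]
theorem liftMulVec_apply (A : X → Matrix ι ι R) (u : ι → R) (r : FreeAlgebra R X) :
    liftMulVec A u r = lift R A r *ᵥ u :=
  rfl

theorem liftMulVec_submatrix (A : X → Matrix ι ι R) (u : ι → R) (e : κ ≃ ι) :
    liftMulVec (fun x => (A x).submatrix e e) (u ∘ e) =
      (LinearEquiv.funCongrLeft R R e).toLinearMap ∘ₗ liftMulVec A u := by
  have hlift : lift R (fun x => (A x).submatrix e e) =
      (reindexAlgEquiv R R e.symm).toAlgHom.comp (lift R A) := by
    ext x
    simp
  ext r k
  simp [hlift, submatrix_mulVec_equiv, Function.comp_assoc]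

end Evaluation

section WordLength

variable (R X : Type*) [CommSemiring R]

noncomputable def wordLengthLE (N : ℕ) : Submodule R (FreeAlgebra R X) :=
  (Finsupp.supported R R {w : FreeMonoid X | w.length ≤ N}).comap
    (basisFreeMonoid R X).repr.toLinearMap

theorem wordLengthLE_mono : Monotone (wordLengthLE R X) := fun _ _ h =>
  comap_mono (Finsupp.supported_mono fun _ hw => le_trans hw h)

variable {R X}

theorem exists_mem_wordLengthLE (r : FreeAlgebra R X) : ∃ N, r ∈ wordLengthLE R X N :=
  ⟨((basisFreeMonoid R X).repr r).support.sup FreeMonoid.length,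
    fun _ hw => Finset.le_sup (f := FreeMonoid.length) hw⟩

theorem exists_forall_mem_wordLengthLE {ι : Type*} [Finite ι] (f : ι → FreeAlgebra R X) :
    ∃ N, ∀ i, f i ∈ wordLengthLE R X N := by
  choose N hN using fun i => exists_mem_wordLengthLE (f i)
  obtain ⟨M, hM⟩ := Finite.bddAbove_range N
  exact ⟨M, fun i => wordLengthLE_mono R X (hM ⟨i, rfl⟩) (hN i)⟩

end WordLength

abbrev BoundedWord (X : Type*) (N : ℕ) := {w : FreeMonoid X // w.length ≤ N}

instance {X : Type*} [Finite X] (N : ℕ) : Finite (BoundedWord X N) :=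
  (List.finite_length_le X N).to_subtype

noncomputable instance {X : Type*} [Finite X] (N : ℕ) : Fintype (BoundedWord X N) :=
  Fintype.ofFinite _

section TruncatedShift

variable (R : Type*) {X : Type*} [CommSemiring R] [DecidableEq X] (N : ℕ)

def wordIndicator (w : FreeMonoid X) : BoundedWord X N → R := fun v => if v.1 = w then 1 else 0

/-- Left multiplication by the letter `x`, truncated at length `N`. -/
def wordShift (x : X) : Matrix (BoundedWord X N) (BoundedWord X N) R :=
  Matrix.of fun v v' => wordIndicator R N (FreeMonoid.of x * v'.1) v

variable {R N}

theorem wordIndicator_of_le {w : FreeMonoid X} (h : w.length ≤ N) :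
    wordIndicator R N w = Pi.single ⟨w, h⟩ 1 := by
  ext v
  simp [wordIndicator, Pi.single_apply, Subtype.ext_iff]

theorem wordIndicator_of_lt {w : FreeMonoid X} (h : N < w.length) :
    wordIndicator R N w = 0 := by
  ext v
  have : v.1 ≠ w := fun hv => (hv ▸ v.2).not_gt h
  simp [wordIndicator, this]

variable [Finite X]

theorem wordShift_mulVec_wordIndicator (x : X) (w : FreeMonoid X) :
    wordShift R N x *ᵥ wordIndicator R N w = wordIndicator R N (FreeMonoid.of x * w) := by
  rcases le_or_gt w.length N with h | h
  · ext v
    simp [wordIndicator_of_le h, wordShift]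
  · have h' : N < (FreeMonoid.of x * w).length := by
      rw [FreeMonoid.length_mul]; omega
    rw [wordIndicator_of_lt h, wordIndicator_of_lt h', mulVec_zero]

theorem lift_wordShift_basisFreeMonoid_mulVec (w : FreeMonoid X) :
    lift R (wordShift R N) (basisFreeMonoid R X w) *ᵥ wordIndicator R N 1 =
      wordIndicator R N w := by
  rw [lift_basisFreeMonoid]
  induction w using FreeMonoid.inductionOn' with
  | one => simp
  | of_mul x w ih =>
    rw [map_mul, FreeMonoid.lift_eval_of, ← mulVec_mulVec, ih, wordShift_mulVec_wordIndicator]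

theorem liftMulVec_wordShift_apply (r : FreeAlgebra R X) (v : BoundedWord X N) :
    liftMulVec (wordShift R N) (wordIndicator R N 1) r v = (basisFreeMonoid R X).repr r v.1 := by
  have : LinearMap.proj v ∘ₗ liftMulVec (wordShift R N) (wordIndicator R N 1) =
      Finsupp.lapply v.1 ∘ₗ (basisFreeMonoid R X).repr.toLinearMap := by
    refine (basisFreeMonoid R X).ext fun w => ?_
    simp [lift_wordShift_basisFreeMonoid_mulVec, wordIndicator, Finsupp.single_apply, eq_comm]
  exact LinearMap.congr_fun this r

theorem disjoint_wordLengthLE_ker_liftMulVec_wordShift :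
    Disjoint (wordLengthLE R X N)
      (LinearMap.ker (liftMulVec (wordShift R N) (wordIndicator R N 1))) := by
  refine disjoint_def.mpr fun r hr hker => (basisFreeMonoid R X).repr.map_eq_zero_iff.mp ?_
  ext w
  rcases le_or_gt w.length N with h | h
  · simpa [liftMulVec_wordShift_apply] using congrFun (LinearMap.mem_ker.mp hker) ⟨w, h⟩
  · exact Finsupp.notMem_support_iff.mp fun hw => (hr hw).not_gt h

end TruncatedShift

theorem mem_span_of_forall_mulVec_mem_span {R X ι : Type*} [CommRing R] [Finite X]
    [DecidableEq X] [Fintype ι] (p : ι → FreeAlgebra R X) (q : FreeAlgebra R X)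
    (h : ∀ (n : ℕ) (A : X → Matrix (Fin n) (Fin n) R) (u : Fin n → R),
      lift R A q *ᵥ u ∈ span R (Set.range fun i => lift R A (p i) *ᵥ u)) :
    q ∈ span R (Set.range p) := by
  obtain ⟨N, hN⟩ := exists_forall_mem_wordLengthLE fun o : Option ι => o.elim q p
  let e := (Fintype.equivFin (BoundedWord X N)).symm
  have hdisj : Disjoint (wordLengthLE R X N) (LinearMap.ker
      (liftMulVec (fun x => (wordShift R N x).submatrix e e) (wordIndicator R N 1 ∘ e))) := by
    rw [liftMulVec_submatrix, LinearEquiv.ker_comp]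
    exact disjoint_wordLengthLE_ker_liftMulVec_wordShift
  exact mem_span_range_of_disjoint_ker hdisj (fun i => hN (some i)) (hN none) (h _ _ _)

end FreeAlgebra

/-- **Corollary 2 (a weak nullstellensatz for free polynomials).**
For `p_1, …, p_m, q` in the free algebra `𝔽⟨x_1, …, x_d⟩` over a field `𝔽`, the
following are equivalent:
(1) for every `n`, all `A_1, …, A_d ∈ 𝔽^{n×n}` and all `u, v ∈ 𝔽^n`, if
    `⟨p_i(A)u, v⟩ = 0` for all `i` then `⟨q(A)u, v⟩ = 0`, where `⟨a, b⟩ = ∑_j a_j b_j`;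
(2) for every `n`, all `A_1, …, A_d ∈ 𝔽^{n×n}` and every `u ∈ 𝔽^n`,
    `q(A)u ∈ Lin{p_1(A)u, …, p_m(A)u}`;
(3) for every `n` and all `A_1, …, A_d ∈ 𝔽^{n×n}`,
    `q(A) ∈ Lin{p_1(A), …, p_m(A)}`;
(4) `q ∈ Lin{p_1, …, p_m}`. -/
theorem free_algebra_weak_nullstellensatz
    (𝔽 : Type*) [Field 𝔽] (d m : ℕ)
    (p : Fin m → FreeAlgebra 𝔽 (Fin d)) (q : FreeAlgebra 𝔽 (Fin d)) :
    [(∀ (n : ℕ) (A : Fin d → Matrix (Fin n) (Fin n) 𝔽) (u v : Fin n → 𝔽),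
        (∀ i : Fin m,
          dotProduct ((FreeAlgebra.lift 𝔽 A (p i)).mulVec u) v = 0) →
        dotProduct ((FreeAlgebra.lift 𝔽 A q).mulVec u) v = 0),
      (∀ (n : ℕ) (A : Fin d → Matrix (Fin n) (Fin n) 𝔽) (u : Fin n → 𝔽),
        (FreeAlgebra.lift 𝔽 A q).mulVec u ∈
          Submodule.span 𝔽
            (Set.range fun i : Fin m => (FreeAlgebra.lift 𝔽 A (p i)).mulVec u)),
      (∀ (n : ℕ) (A : Fin d → Matrix (Fin n) (Fin n) 𝔽),
        FreeAlgebra.lift 𝔽 A q ∈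
          Submodule.span 𝔽
            (Set.range fun i : Fin m => FreeAlgebra.lift 𝔽 A (p i))),
      q ∈ Submodule.span 𝔽 (Set.range p)].TFAE := by
  tfae_have 1 ↔ 2 := by
    simp only [mem_span_iff_forall_dotProduct_eq_zero, Set.forall_mem_range]
  tfae_have 2 → 4 := mem_span_of_forall_mulVec_mem_span p q
  tfae_have 4 → 3 := fun h n A => apply_mem_span_range_of_mem_span (lift 𝔽 A).toLinearMap h
  tfae_have 3 → 2 := fun h n A u =>
    apply_mem_span_range_of_mem_span (LinearMap.applyₗ u ∘ₗ toLin'.toLinearMap) (h n A)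
  tfae_finish
end
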